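/- Let E be a real inner product space and f : E → ℝ a convex function. Let ε, δ > 0, let u be a subgradient of f at a, and v a subgradient of f at b (i.e., f(w) ≥ f(a) + ⟪u, w − a⟫ for all w, and similarly for v at b). Set x := a + ε·u and y := b + δ·v. Then ⟪u − v, x − y⟫ ≥ ε·‖u‖² + δ·‖v‖² − (ε + δ)·⟪u, v⟫; in particular ⟪u − v, x − y⟫ ≥ −(ε + δ)·⟪u, v⟫. -/

import Mathlib

open RealInnerProductSpace

/- Adding the subgradient inequalities at `a` (tested at `b`) and at `b` (tested at `a`) shows that
subgradients are monotone, `0 ≤ ⟪u - v, a - b⟫`. Expanding `x - y = (a - b) + (ε • u - δ • v)`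
then leaves `ε‖u‖² + δ‖v‖² - (ε + δ)⟪u, v⟫` as the remaining term, and its first two summands
are nonnegative. -/

section Subgradient

variable {E : Type*} [NormedAddCommGroup E] [InnerProductSpace ℝ E]

theorem inner_sub_sub_nonneg_of_subgradient {f : E → ℝ} {a b u v : E}
    (hu : ∀ w, f a + ⟪u, w - a⟫ ≤ f w) (hv : ∀ w, f b + ⟪v, w - b⟫ ≤ f w) :
    0 ≤ ⟪u - v, a - b⟫ := by
  have hsum : ⟪u, b - a⟫ + ⟪v, a - b⟫ ≤ 0 := by linarith [hu b, hv a]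
  have hswap : ⟪u, b - a⟫ = -⟪u, a - b⟫ := by rw [← inner_neg_right, neg_sub]
  rw [inner_sub_left]
  linarith

theorem inner_sub_add_smul_sub_add_smul (a b u v : E) (ε δ : ℝ) :
    ⟪u - v, a + ε • u - (b + δ • v)⟫ =
      ⟪u - v, a - b⟫ + (ε * ‖u‖ ^ 2 + δ * ‖v‖ ^ 2 - (ε + δ) * ⟪u, v⟫) := by
  rw [show a + ε • u - (b + δ • v) = (a - b) + (ε • u - δ • v) by abel]
  simp only [inner_add_right, inner_sub_right, inner_sub_left, real_inner_smul_right,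
    real_inner_self_eq_norm_sq, real_inner_comm v u]
  ring

end Subgradient

theorem stmt_7_general {E : Type*} [NormedAddCommGroup E] [InnerProductSpace ℝ E]
    (f : E → ℝ) (ε δ : ℝ) (hε : 0 < ε) (hδ : 0 < δ)
    (a b u v : E)
    (hu : ∀ w, f a + ⟪u, w - a⟫ ≤ f w)
    (hv : ∀ w, f b + ⟪v, w - b⟫ ≤ f w)
    (x y : E) (hx : x = a + ε • u) (hy : y = b + δ • v) :
    ε * ‖u‖ ^ 2 + δ * ‖v‖ ^ 2 - (ε + δ) * ⟪u, v⟫ ≤ ⟪u - v, x - y⟫ ∧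
    -((ε + δ) * ⟪u, v⟫) ≤ ⟪u - v, x - y⟫ := by
  subst hx hy
  have hmono := inner_sub_sub_nonneg_of_subgradient hu hv
  have hu_sq : 0 ≤ ε * ‖u‖ ^ 2 := by positivity
  have hv_sq : 0 ≤ δ * ‖v‖ ^ 2 := by positivity
  rw [inner_sub_add_smul_sub_add_smul]
  constructor <;> linarith

/-- If `u` is a subgradient of a convex `f` at `a`, `v` a subgradient of `f` at `b`, and
`x = a + ε·u`, `y = b + δ·v` with `ε, δ > 0`, then
`⟪u − v, x − y⟫ ≥ ε·‖u‖² + δ·‖v‖² − (ε + δ)·⟪u, v⟫`; in particular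
`⟪u − v, x − y⟫ ≥ −(ε + δ)·⟪u, v⟫`. -/
theorem stmt_7 {E : Type*} [NormedAddCommGroup E] [InnerProductSpace ℝ E]
    (f : E → ℝ) (hf : ConvexOn ℝ Set.univ f) (ε δ : ℝ) (hε : 0 < ε) (hδ : 0 < δ)
    (a b u v : E)
    (hu : ∀ w, f a + ⟪u, w - a⟫ ≤ f w)
    (hv : ∀ w, f b + ⟪v, w - b⟫ ≤ f w)
    (x y : E) (hx : x = a + ε • u) (hy : y = b + δ • v) :
    ε * ‖u‖ ^ 2 + δ * ‖v‖ ^ 2 - (ε + δ) * ⟪u, v⟫ ≤ ⟪u - v, x - y⟫ ∧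
    -((ε + δ) * ⟪u, v⟫) ≤ ⟪u - v, x - y⟫ :=
  stmt_7_general f ε δ hε hδ a b u v hu hv x y hx hy
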